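/- Every invariant f ∈ A_n = ker D_n, when the variables x_0, ..., x_{⌊n/2⌋} are set to zero and x_{⌊n/2⌋+1}, ..., x_n are renamed to x_0, ..., x_{n−⌊n/2⌋−1}, becomes a constant; that is, π_{n−⌊n/2⌋−1, n}(A_n) = K. -/

import Mathlib

/-!
`Dw` is the lowering operator of an sl₂-triple `(Dw, Ew, Hw)` of derivations of
`K[x_0, …, x_n]`, with `Ew x_i = (i+1)(n-i) x_{i+1}` and `Hw x_i = (n-2i) x_i`. Grade polynomials
by the bidegree `(d, v)` of a monomial: its total degree and its weight `∑ i·u_i`. Every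
bihomogeneous component of an invariant is again an invariant, `Hw` acts on it by `n d - 2 v`, and
`Ew` raises the weight, which is at most `n d`, so `Ew` is nilpotent on it. A lowest weight vector
on which the raising operator is nilpotent has nonnegative `Hw`-eigenvalue, so `2 v ≤ n d` for
every monomial of an invariant. A monomial in the variables `x_i` with `2 i > n` alone violates
this; hence every nonconstant monomial of an invariant involves some `x_i` with `i ≤ n/2`, and the
projection kills it.
-/

open MvPolynomial Finset

noncomputable def Dw (K : Type) [CommRing K] (n : ℕ) :
    Derivation K (MvPolynomial (Fin (n + 1)) K) (MvPolynomial (Fin (n + 1)) K) :=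
  MvPolynomial.mkDerivation K fun i =>
    if i.1 = 0 then 0 else
      MvPolynomial.X ⟨i.1 - 1, Nat.lt_of_le_of_lt (Nat.sub_le _ _) i.isLt⟩

open Fin.NatCast in
noncomputable def piHom (K : Type) [CommRing K] (m n : ℕ) :
    MvPolynomial (Fin (n + 1)) K →ₐ[K] MvPolynomial (Fin (m + 1)) K :=
  MvPolynomial.aeval fun i : Fin (n + 1) =>
    if i.1 < n - m then 0 else MvPolynomial.X ((i.1 - (n - m) : ℕ) : Fin (m + 1))

theorem Finsupp.induction_single_one {σ : Type*} {P : (σ →₀ ℕ) → Prop} (u : σ →₀ ℕ)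
    (zero : P 0) (add : ∀ u v, P u → P v → P (u + v)) (single : ∀ i, P (Finsupp.single i 1)) :
    P u := by
  refine Finsupp.induction_linear u zero add fun i b => ?_
  induction b with
  | zero => simpa using zero
  | succ b ih => simpa [Finsupp.single_add] using add _ _ ih (single i)

namespace MvPolynomial

variable {σ R M : Type*} [CommSemiring R]

section AddCommMonoid

variable [AddCommMonoid M] {w : σ → M}

theorem isWeightedHomogeneous_mkDerivation_monomial {g : σ → MvPolynomial σ R} {δ : M}
    (hg : ∀ i, IsWeightedHomogeneous w (g i) (w i + δ)) (u : σ →₀ ℕ) (r : R) :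
    IsWeightedHomogeneous w (mkDerivation R g (monomial u r)) (Finsupp.weight w u + δ) := by
  induction u using Finsupp.induction_single_one generalizing r with
  | zero => simpa [← C_apply] using isWeightedHomogeneous_zero R w _
  | single i =>
    rw [← C_mul_X_eq_monomial, ← smul_eq_C_mul, Derivation.map_smul, mkDerivation_X,
      smul_eq_C_mul, Finsupp.weight_single, one_smul]
    exact (hg i).C_mul r
  | add u v hu hv =>
    rw [← mul_one r, ← monomial_mul, Derivation.leibniz, map_add, smul_eq_mul, smul_eq_mul]
    refine IsWeightedHomogeneous.add ?_ ?_
    · simpa [add_assoc] using (isWeightedHomogeneous_monomial w u r rfl).mul (hv 1)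
    · simpa [add_assoc, add_left_comm] using (isWeightedHomogeneous_monomial w v 1 rfl).mul (hu r)

theorem IsWeightedHomogeneous.mkDerivation {g : σ → MvPolynomial σ R} {δ : M}
    (hg : ∀ i, IsWeightedHomogeneous w (g i) (w i + δ)) {f : MvPolynomial σ R} {m : M}
    (hf : IsWeightedHomogeneous w f m) :
    IsWeightedHomogeneous w (MvPolynomial.mkDerivation R g f) (m + δ) := by
  induction hf using IsWeightedHomogeneous.induction_on with
  | zero => simpa using isWeightedHomogeneous_zero R w _
  | add p q _ _ hp hq => simpa using hp.add hq
  | monomial u r hu => simpa [hu] using isWeightedHomogeneous_mkDerivation_monomial hg u r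

theorem mkDerivation_smul_X_monomial (φ : M →+ R) (u : σ →₀ ℕ) (r : R) :
    mkDerivation R (fun i => φ (w i) • X i) (monomial u r) =
      φ (Finsupp.weight w u) • monomial u r := by
  induction u using Finsupp.induction_single_one generalizing r with
  | zero => simp [← C_apply]
  | single i =>
    rw [← C_mul_X_eq_monomial, ← smul_eq_C_mul, Derivation.map_smul, mkDerivation_X,
      Finsupp.weight_single, one_smul, smul_comm]
  | add u v hu hv =>
    rw [← mul_one r, ← monomial_mul, Derivation.leibniz, hu, hv, map_add, smul_eq_mul, smul_eq_mul,
      mul_smul_comm, mul_smul_comm, mul_comm (monomial v 1), ← add_smul, ← map_add, add_comm]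

theorem IsWeightedHomogeneous.mkDerivation_smul_X (φ : M →+ R) {f : MvPolynomial σ R} {m : M}
    (hf : IsWeightedHomogeneous w f m) :
    MvPolynomial.mkDerivation R (fun i => φ (w i) • X i) f = φ m • f := by
  induction hf using IsWeightedHomogeneous.induction_on with
  | zero => simp
  | add p q _ _ hp hq => simp [hp, hq]
  | monomial u r hu => rw [mkDerivation_smul_X_monomial, hu]

end AddCommMonoid

theorem map_weightedHomogeneousComponent_eq_zero [AddCancelCommMonoid M] {w : σ → M} {F : Type*}
    [FunLike F (MvPolynomial σ R) (MvPolynomial σ R)]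
    [AddMonoidHomClass F (MvPolynomial σ R) (MvPolynomial σ R)] {L : F} {δ : M}
    (hL : ∀ {f m}, IsWeightedHomogeneous w f m → IsWeightedHomogeneous w (L f) (m + δ))
    {f : MvPolynomial σ R} (hf : L f = 0) (m : M) :
    L (weightedHomogeneousComponent w m f) = 0 := by
  have hfin := (weightedHomogeneousComponent_finsupp (w := w) f).fun_comp (map_zero L)
  have hL' (m' : M) :
      IsWeightedHomogeneous w (L (weightedHomogeneousComponent w m' f)) (m' + δ) :=
    hL (weightedHomogeneousComponent_isWeightedHomogeneous m' f)
  calc L (weightedHomogeneousComponent w m f)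
      = weightedHomogeneousComponent w (m + δ) (L (weightedHomogeneousComponent w m f)) :=
        (hL' m).weightedHomogeneousComponent_same.symm
    _ = weightedHomogeneousComponent w (m + δ) (L f) := by
        conv_rhs => rw [← sum_weightedHomogeneousComponent w f,
          map_finsum L (weightedHomogeneousComponent_finsupp f), map_finsum _ hfin]
        rw [finsum_eq_single _ m fun m' hm' => ?_]
        exact (hL' m').weightedHomogeneousComponent_ne _ fun h => hm' (add_right_cancel h).symm
    _ = 0 := by rw [hf, map_zero]

end MvPolynomial

theorem eq_zero_of_lowest_weight_neg {K V : Type*} [DivisionRing K] [CharZero K] [AddCommGroup V]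
    [Module K V] {D E : Module.End K V} {ℓ : ℤ} (hℓ : ℓ < 0) {v : V} (hv : D v = 0)
    (hDE : ∀ k : ℕ, D (E ((E ^ k) v)) - E (D ((E ^ k) v)) = ((ℓ - 2 * k : ℤ) : K) • (E ^ k) v)
    {N : ℕ} (hN : (E ^ N) v = 0) : v = 0 := by
  have hD : ∀ k : ℕ, D ((E ^ (k + 1)) v) = (((k + 1) * (ℓ - k) : ℤ) : K) • (E ^ k) v := by
    intro k
    induction k with
    | zero => simpa [hv] using hDE 0
    | succ k ih =>
      rw [pow_succ', Module.End.mul_apply, eq_add_of_sub_eq (hDE (k + 1)), ih, map_smul,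
        ← Module.End.mul_apply, ← pow_succ', ← add_smul, ← Int.cast_add]
      congr 2
      push_cast
      ring
  induction N with
  | zero => simpa using hN
  | succ k ih =>
    have h := hD k
    rw [hN, map_zero, eq_comm, smul_eq_zero] at h
    refine ih (h.resolve_left ?_)
    exact Int.cast_ne_zero.mpr (mul_ne_zero (by omega) (by omega))

noncomputable def Ew (K : Type) [CommRing K] (n : ℕ) :
    Derivation K (MvPolynomial (Fin (n + 1)) K) (MvPolynomial (Fin (n + 1)) K) :=
  mkDerivation K fun i =>
    if h : i.1 < n then (((i.1 : K) + 1) * ((n : K) - i.1)) • X ⟨i.1 + 1, by omega⟩ else 0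

def biweight (n : ℕ) : Fin (n + 1) → ℤ × ℤ := fun i => (1, i)

def hEigenvalue (K : Type) [CommRing K] (n : ℕ) : ℤ × ℤ →+ K :=
  (Int.castAddHom K).comp ((n : ℤ) • AddMonoidHom.fst ℤ ℤ - 2 • AddMonoidHom.snd ℤ ℤ)

noncomputable def Hw (K : Type) [CommRing K] (n : ℕ) :
    Derivation K (MvPolynomial (Fin (n + 1)) K) (MvPolynomial (Fin (n + 1)) K) :=
  mkDerivation K fun i => hEigenvalue K n (biweight n i) • X i

section Weitzenbock

variable {K : Type} [CommRing K] {n : ℕ}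

theorem hEigenvalue_apply (d v : ℤ) : hEigenvalue K n (d, v) = ((n * d - 2 * v : ℤ) : K) := by
  simp [hEigenvalue]

theorem Dw_Ew_X (i : Fin (n + 1)) :
    Dw K n (Ew K n (X i)) = (((i.1 : K) + 1) * ((n : K) - i.1)) • X i := by
  rw [Ew, mkDerivation_X]
  split_ifs with h
  · rw [Derivation.map_smul, Dw, mkDerivation_X, if_neg (Nat.succ_ne_zero _)]
    rfl
  · have hi : i.1 = n := by omega
    simp [hi]

theorem Ew_Dw_X (i : Fin (n + 1)) :
    Ew K n (Dw K n (X i)) = ((i.1 : K) * ((n : K) - i.1 + 1)) • X i := by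
  rw [Dw, mkDerivation_X]
  split_ifs with h
  · simp [h]
  · rw [Ew, mkDerivation_X, dif_pos (show i.1 - 1 < n by omega)]
    congr 1
    · push_cast [Nat.cast_sub (by omega : 1 ≤ i.1)]
      ring
    · congr
      simp only
      omega

theorem Dw_Ew_commutator : ⁅Dw K n, Ew K n⁆ = Hw K n := by
  refine derivation_ext fun i => ?_
  rw [Derivation.commutator_apply, Dw_Ew_X, Ew_Dw_X, ← sub_smul, Hw, mkDerivation_X, biweight,
    hEigenvalue_apply]
  push_cast
  ring_nf

theorem isWeightedHomogeneous_Dw {f : MvPolynomial (Fin (n + 1)) K} {m : ℤ × ℤ}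
    (hf : IsWeightedHomogeneous (biweight n) f m) :
    IsWeightedHomogeneous (biweight n) (Dw K n f) (m + (0, -1)) := by
  refine hf.mkDerivation fun i => ?_
  split_ifs with h
  · exact isWeightedHomogeneous_zero K _ _
  · convert isWeightedHomogeneous_X K (biweight n) _ using 1
    simp only [biweight, Prod.mk_add_mk, add_zero, Prod.mk.injEq, true_and]
    omega

theorem isWeightedHomogeneous_Ew {f : MvPolynomial (Fin (n + 1)) K} {m : ℤ × ℤ}
    (hf : IsWeightedHomogeneous (biweight n) f m) :
    IsWeightedHomogeneous (biweight n) (Ew K n f) (m + (0, 1)) := by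
  refine hf.mkDerivation fun i => ?_
  split_ifs with h
  · refine (weightedHomogeneousSubmodule K _ _).smul_mem _ ?_
    rw [mem_weightedHomogeneousSubmodule]
    convert isWeightedHomogeneous_X K (biweight n) _ using 1
    simp [biweight]
  · exact isWeightedHomogeneous_zero K _ _

theorem isWeightedHomogeneous_Ew_pow {f : MvPolynomial (Fin (n + 1)) K} {d v : ℤ}
    (hf : IsWeightedHomogeneous (biweight n) f (d, v)) (k : ℕ) :
    IsWeightedHomogeneous (biweight n) (((Ew K n : Module.End K _) ^ k) f) (d, v + k) := by
  induction k with
  | zero => simpa using hf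
  | succ k ih => simpa [pow_succ', add_assoc] using isWeightedHomogeneous_Ew ih

theorem Hw_apply_of_isWeightedHomogeneous {f : MvPolynomial (Fin (n + 1)) K} {m : ℤ × ℤ}
    (hf : IsWeightedHomogeneous (biweight n) f m) : Hw K n f = hEigenvalue K n m • f :=
  hf.mkDerivation_smul_X _

theorem weight_biweight (u : Fin (n + 1) →₀ ℕ) :
    Finsupp.weight (biweight n) u =
      (∑ i ∈ u.support, (u i : ℤ), ∑ i ∈ u.support, (u i : ℤ) * i) := by
  simp [Finsupp.weight_apply, Finsupp.sum, Prod.ext_iff, biweight, Prod.fst_sum, Prod.snd_sum]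

theorem IsWeightedHomogeneous.eq_zero_of_lt {f : MvPolynomial (Fin (n + 1)) K} {d v : ℤ}
    (hf : IsWeightedHomogeneous (biweight n) f (d, v)) (hv : n * d < v) : f = 0 := by
  refine hf.eq_zero_of_no_monomials fun u hu => hv.not_ge ?_
  simp only [weight_biweight, Prod.mk.injEq] at hu
  rw [← hu.1, ← hu.2, Finset.mul_sum]
  refine Finset.sum_le_sum fun i _ => ?_
  rw [mul_comm]
  gcongr
  exact_mod_cast i.is_le

end Weitzenbock

section Invariants

variable {K : Type} [Field K] [CharZero K] {n : ℕ}

theorem two_mul_le_of_Dw_eq_zero {f : MvPolynomial (Fin (n + 1)) K} {d v : ℤ}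
    (hf : IsWeightedHomogeneous (biweight n) f (d, v)) (hD : Dw K n f = 0) (hf0 : f ≠ 0) :
    2 * v ≤ n * d := by
  by_contra! hlt
  refine hf0 (eq_zero_of_lowest_weight_neg (D := (Dw K n : Module.End K _)) (E := Ew K n)
    (ℓ := n * d - 2 * v) (by omega) hD (fun k => ?_) (N := (n * d - v).toNat + 1) ?_)
  · have hk := isWeightedHomogeneous_Ew_pow hf k
    rw [Derivation.coeFn_coe, Derivation.coeFn_coe, ← Derivation.commutator_apply,
      Dw_Ew_commutator, Hw_apply_of_isWeightedHomogeneous hk, hEigenvalue_apply]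
    congr 2
    ring
  · exact IsWeightedHomogeneous.eq_zero_of_lt (isWeightedHomogeneous_Ew_pow hf _) (by omega)

theorem exists_mem_support_two_mul_le_of_Dw_eq_zero {f : MvPolynomial (Fin (n + 1)) K}
    (hD : Dw K n f = 0) {u : Fin (n + 1) →₀ ℕ} (hu : u ∈ f.support) (hu0 : u ≠ 0) :
    ∃ i ∈ u.support, 2 * i.1 ≤ n := by
  classical
  set g := weightedHomogeneousComponent (biweight n) (Finsupp.weight (biweight n) u) f
  have hg : IsWeightedHomogeneous (biweight n) g
      (∑ i ∈ u.support, (u i : ℤ), ∑ i ∈ u.support, (u i : ℤ) * i) := by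
    rw [← weight_biweight]
    exact weightedHomogeneousComponent_isWeightedHomogeneous _ f
  have hg0 : g ≠ 0 := by
    refine ne_zero_iff.mpr ⟨u, ?_⟩
    rwa [coeff_weightedHomogeneousComponent, if_pos rfl, ← mem_support_iff]
  have hle := two_mul_le_of_Dw_eq_zero hg
    (map_weightedHomogeneousComponent_eq_zero isWeightedHomogeneous_Dw hD _) hg0
  by_contra! hlt
  refine hle.not_gt ?_
  rw [Finset.mul_sum, Finset.mul_sum]
  refine Finset.sum_lt_sum_of_nonempty (Finsupp.support_nonempty_iff.mpr hu0) fun i hi => ?_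
  have hui : 0 < (u i : ℤ) := by exact_mod_cast Nat.pos_of_ne_zero (Finsupp.mem_support_iff.mp hi)
  have := hlt i hi
  nlinarith

end Invariants

section Projection

variable {K : Type} [CommRing K] {m n : ℕ}

theorem piHom_C (c : K) : piHom K m n (C c) = C c := by
  rw [piHom, aeval_C, algebraMap_eq]

theorem piHom_monomial_eq_zero {u : Fin (n + 1) →₀ ℕ} {i : Fin (n + 1)} (hi : i ∈ u.support)
    (hin : i.1 < n - m) (r : K) :
    piHom K m n (monomial u r) = 0 := by
  rw [piHom, aeval_monomial, Finsupp.prod, Finset.prod_eq_zero hi, mul_zero]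
  rw [if_pos hin, zero_pow (Finsupp.mem_support_iff.mp hi)]

theorem piHom_eq_C_coeff_zero {f : MvPolynomial (Fin (n + 1)) K}
    (hf : ∀ u ∈ f.support, u ≠ 0 → ∃ i ∈ u.support, i.1 < n - m) :
    piHom K m n f = C (coeff 0 f) := by
  conv_lhs => rw [f.as_sum]
  rw [map_sum, Finset.sum_eq_single 0, monomial_zero', piHom_C]
  · intro u hu hu0
    obtain ⟨i, hi, hin⟩ := hf u hu hu0
    exact piHom_monomial_eq_zero hi hin _
  · intro h0
    rw [notMem_support_iff.mp h0, map_zero, map_zero]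

end Projection

theorem stmt6 (K : Type) [Field K] [CharZero K] (n : ℕ) (hn : 1 ≤ n) :
    ⇑(piHom K (n - n / 2 - 1) n) '' {f : MvPolynomial (Fin (n + 1)) K | Dw K n f = 0}
      = Set.range (MvPolynomial.C :
          K → MvPolynomial (Fin (n - n / 2 - 1 + 1)) K) := by
  refine Set.Subset.antisymm ?_ ?_
  · rintro _ ⟨f, hf, rfl⟩
    refine ⟨coeff 0 f, (piHom_eq_C_coeff_zero fun u hu hu0 => ?_).symm⟩
    obtain ⟨i, hi, hin⟩ := exists_mem_support_two_mul_le_of_Dw_eq_zero hf hu hu0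
    exact ⟨i, hi, by omega⟩
  · rintro _ ⟨c, rfl⟩
    exact ⟨C c, derivation_C _ c, piHom_C c⟩
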